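/- Let γ = !![a,b;c,d] ∈ SL(2,ℝ) be hyperbolic with two real fixed points γ⁻ < 0 < γ⁺, let v ∈ SL(2,ℝ) satisfy v • i = i and lim_{t→+∞} v • (eᵗ i) = a/c in ℂ, and let t_γ ≥ 0 be such that e^{t_γ} i ∈ Axis(γ). Then there exists t' ≥ 0 with v • (e^{t'} i) ∈ Axis(γ); moreover, for every such t', the point v • (e^{t'} i) lies on the geodesic segment from e^{t_γ} i to γ • (e^{t_γ} i), i.e. dist(e^{t_γ} i, v • (e^{t'} i)) + dist(v • (e^{t'} i), γ • (e^{t_γ} i)) = dist(e^{t_γ} i, γ • (e^{t_γ} i)) = ℓ(γ); in particular dist(v • (e^{t'} i), e^{t_γ} i) ≤ ℓ(γ), dist(v • (e^{t'} i), γ • (e^{t_γ} i)) ≤ ℓ(γ), and |t_γ − t'| ≤ ℓ(γ). -/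

import Mathlib

open UpperHalfPlane Matrix Real Filter Topology
open scoped MatrixGroups

noncomputable section

namespace BellisFormal

/-- The point `eᵗ i` of the upper half-plane. -/
def vray (t : ℝ) : ℍ := ⟨⟨0, Real.exp t⟩, Real.exp_pos t⟩

/-- Translation length of `γ`. -/
def transLength (γ : SL(2, ℝ)) : ℝ := ⨅ z : ℍ, dist z (γ • z)

/-- `γ` is hyperbolic: `|tr γ| > 2`. -/
def IsHyperbolic (γ : SL(2, ℝ)) : Prop :=
  2 < |Matrix.trace (γ : Matrix (Fin 2) (Fin 2) ℝ)|

/-- Axis of `γ`. -/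
def Axis (γ : SL(2, ℝ)) : Set ℍ := {z : ℍ | dist z (γ • z) = transLength γ}

/-- `x` is a real fixed point of the Möbius map of `γ`. -/
def IsFixedPt (γ : SL(2, ℝ)) (x : ℝ) : Prop :=
  γ 1 0 * x ^ 2 + (γ 1 1 - γ 0 0) * x - γ 0 1 = 0

def IsAttractingFixedPt (γ : SL(2, ℝ)) (x : ℝ) : Prop :=
  IsFixedPt γ x ∧ 1 < (γ 1 0 * x + γ 1 1) ^ 2

def IsRepellingFixedPt (γ : SL(2, ℝ)) (x : ℝ) : Prop :=
  IsFixedPt γ x ∧ (γ 1 0 * x + γ 1 1) ^ 2 < 1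

instance : TopologicalSpace SL(2, ℝ) :=
  TopologicalSpace.induced (fun g => (g : Matrix (Fin 2) (Fin 2) ℝ)) inferInstance

structure IsNestedSequence (γ : ℕ → SL(2, ℝ)) (γp γm : ℕ → ℝ) (t : ℕ → ℝ) : Prop where
  hyperbolic : ∀ n, IsHyperbolic (γ n)
  discrete : DiscreteTopology (Subgroup.closure (Set.range γ) : Subgroup SL(2, ℝ))
  attracting : ∀ n, IsAttractingFixedPt (γ n) (γp n)
  repelling : ∀ n, IsRepellingFixedPt (γ n) (γm n)
  plus_pos : ∀ n, 0 < γp n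
  plus_mono : StrictMono γp
  minus_neg : ∀ n, γm n < 0
  minus_anti : StrictAnti γm
  t_pos : ∀ n, 0 < t n
  axis_meets : ∀ n, ∀ s : ℝ, 0 ≤ s → (vray s ∈ Axis (γ n) ↔ s = t n)
  len_anti : StrictAnti fun n => transLength (γ n)
  len_tendsto : Filter.Tendsto (fun n => transLength (γ n)) Filter.atTop (nhds 0)

/-- geodesic flow matrix -/
def A (t : ℝ) : SL(2, ℝ) :=
  ⟨!![Real.exp (t / 2), 0; 0, Real.exp (-(t / 2))], by
    simp [Matrix.det_fin_two_of, ← Real.exp_add]⟩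

/-- horocyclic flow matrix -/
def N (s : ℝ) : SL(2, ℝ) :=
  ⟨!![1, s; 0, 1], by simp [Matrix.det_fin_two_of]⟩

/-- the distance `d₁` between unit tangent vectors encoded as elements of `SL(2,ℝ)` -/
def d1 (g h : SL(2, ℝ)) : ℝ :=
  dist (g • vray 0) (h • vray 0) + dist (g • vray 1) (h • vray 1)

/-- product `α 0 * α 1 * ⋯ * α n` -/
def seqProd (α : ℕ → SL(2, ℝ)) (n : ℕ) : SL(2, ℝ) :=
  ((List.range (n + 1)).map α).prod


/-- the point `a + y i` of the upper half-plane -/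
def mkPt (a y : ℝ) (hy : 0 < y) : ℍ := ⟨⟨a, y⟩, hy⟩

/-- the Busemann cocycle values `r_n = B_∞(β_n⁻¹ • i, i)` -/
def busR (α : ℕ → SL(2, ℝ)) (n : ℕ) : ℝ :=
  - Real.log (((seqProd α n)⁻¹ • UpperHalfPlane.I).im)


/-!
The fixed-point equations put `γ` in the form `!![a, -c xm xp; c, a - c (xm + xp)]` with
`(a - c xm) (a - c xp) = 1`, and then `sinh (d(z, γ z) / 2) = |c| |z - xm| |z - xp| / (2 Im z)`.
Since `|z - xm| |z - xp| ≥ Im z (xp - xm)`, with equality exactly on the semicircle over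
`[xm, xp]`, that semicircle is the axis. A rotation `v` about `i` whose ray tends to `a / c`
satisfies `c v₀₀ = a v₁₀`, and its ray meets the semicircle exactly when
`e^{2t} = -(c + a xm) (c + a xp)`; this is `≥ 1` because `e^{tγ} i` lies on the axis.
The Möbius map `z ↦ (z - xm) / (xp - z)` carries the axis isometrically onto the imaginary axis,
monotonically in `Re z`, so betweenness on the axis reduces to the real part of the crossing point
lying between `0` and `Re (γ • e^{tγ} i)`, a polynomial inequality. The bound on `|tγ - t'|` is
the triangle inequality at `i`.
-/

lemma det_fin_two_eq_one (g : SL(2, ℝ)) : g 0 0 * g 1 1 - g 0 1 * g 1 0 = 1 := by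
  rw [← Matrix.det_fin_two]
  exact g.det_coe

@[simp] lemma vray_re (t : ℝ) : (vray t).re = 0 := rfl

@[simp] lemma vray_im (t : ℝ) : (vray t).im = exp t := rfl

lemma vray_zero : vray 0 = I := by
  ext
  simp [vray, Complex.ext_iff]

lemma dist_vray (s t : ℝ) : dist (vray s) (vray t) = |s - t| :=
  (isometry_vertical_line 0).dist_eq s t

lemma coe_smul_eq_div (g : SL(2, ℝ)) (z : ℍ) :
    ((g • z : ℍ) : ℂ) = (g 0 0 * z + g 0 1) / (g 1 0 * z + g 1 1) := by
  simp [UpperHalfPlane.coe_specialLinearGroup_apply]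

lemma smul_vray_re_im (g : SL(2, ℝ)) (t : ℝ) :
    (g • vray t).re * (g 1 1 ^ 2 + g 1 0 ^ 2 * exp t ^ 2) =
        g 0 1 * g 1 1 + g 0 0 * g 1 0 * exp t ^ 2 ∧
      (g • vray t).im * (g 1 1 ^ 2 + g 1 0 ^ 2 * exp t ^ 2) = exp t := by
  have h : ((g • vray t : ℍ) : ℂ) * (g 1 0 * vray t + g 1 1) = g 0 0 * vray t + g 0 1 := by
    rw [coe_smul_eq_div]
    exact div_mul_cancel₀ _ (UpperHalfPlane.denom_ne_zero (g : GL (Fin 2) ℝ) (vray t))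
  have hre := congrArg Complex.re h
  have him := congrArg Complex.im h
  simp only [Complex.mul_re, Complex.mul_im, Complex.add_re, Complex.add_im, Complex.ofReal_re,
    Complex.ofReal_im, coe_re, coe_im, vray_re, vray_im] at hre him
  constructor
  · linear_combination g 1 1 * hre + g 1 0 * exp t * him
  · linear_combination g 1 1 * him - g 1 0 * exp t * hre + exp t * det_fin_two_eq_one g

lemma sinh_half_dist_smul (g : SL(2, ℝ)) (z : ℍ) :
    sinh (dist z (g • z) / 2) =
      ‖(g 1 0 : ℂ) * z ^ 2 + (g 1 1 - g 0 0 : ℝ) * z - g 0 1‖ / (2 * z.im) := by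
  have hden := UpperHalfPlane.denom_ne_zero (g : GL (Fin 2) ℝ) z
  simp only [UpperHalfPlane.denom, SpecialLinearGroup.coe_GL_coe_matrix] at hden
  have hsub : (z : ℂ) - (g • z : ℍ) =
      ((g 1 0 : ℂ) * z ^ 2 + (g 1 1 - g 0 0 : ℝ) * z - g 0 1) / (g 1 0 * z + g 1 1) := by
    rw [coe_smul_eq_div, eq_div_iff hden, sub_mul, div_mul_cancel₀ _ hden]
    push_cast
    ring
  have him : (g • z).im = z.im / ‖(g 1 0 : ℂ) * z + g 1 1‖ ^ 2 := by
    rw [Complex.sq_norm, show g • z = (g : GL (Fin 2) ℝ) • z from rfl,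
      UpperHalfPlane.im_smul_eq_div_normSq]
    simp [UpperHalfPlane.denom]
  have hpos : 0 < ‖(g 1 0 : ℂ) * z + g 1 1‖ := norm_pos_iff.mpr hden
  rw [sinh_half_dist, him, dist_eq_norm, hsub, norm_div, mul_div_assoc',
    Real.sqrt_div' _ (by positivity), ← sq, Real.sqrt_sq z.im_pos.le, Real.sqrt_sq hpos.le]
  field_simp

lemma transLength_eq_of_forall_le {γ : SL(2, ℝ)} {z₀ : ℍ}
    (h : ∀ z : ℍ, dist z₀ (γ • z₀) ≤ dist z (γ • z)) : transLength γ = dist z₀ (γ • z₀) :=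
  le_antisymm (ciInf_le ⟨_, Set.forall_mem_range.mpr fun _ => dist_nonneg⟩ z₀) (le_ciInf h)

lemma smul_mem_axis {γ : SL(2, ℝ)} {z : ℍ} (hz : z ∈ Axis γ) : γ • z ∈ Axis γ := by
  rw [Axis, Set.mem_ofPred_eq, dist_smul]
  exact hz

def semicircle (xm xp : ℝ) : Set ℍ := {z | (z.re - xm) * (z.re - xp) + z.im ^ 2 = 0}

lemma norm_sub_mul_norm_sub_sq (z : ℍ) (xm xp : ℝ) :
    (‖(z : ℂ) - xm‖ * ‖(z : ℂ) - xp‖) ^ 2 =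
      ((z.re - xm) * (z.re - xp) + z.im ^ 2) ^ 2 + (z.im * (xp - xm)) ^ 2 := by
  rw [mul_pow, Complex.sq_norm, Complex.sq_norm]
  simp [Complex.normSq_apply]
  ring

lemma im_mul_sub_le_norm_mul_norm (z : ℍ) (xm xp : ℝ) :
    z.im * (xp - xm) ≤ ‖(z : ℂ) - xm‖ * ‖(z : ℂ) - xp‖ := by
  refine abs_le_of_sq_le_sq' ?_ (by positivity) |>.2
  rw [norm_sub_mul_norm_sub_sq]
  exact le_add_of_nonneg_left (sq_nonneg _)

lemma norm_mul_norm_eq_iff_mem_semicircle (z : ℍ) {xm xp : ℝ} (hle : xm ≤ xp) :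
    ‖(z : ℂ) - xm‖ * ‖(z : ℂ) - xp‖ = z.im * (xp - xm) ↔ z ∈ semicircle xm xp := by
  rw [← sq_eq_sq₀ (by positivity) (mul_nonneg z.im_pos.le (sub_nonneg.mpr hle)),
    norm_sub_mul_norm_sub_sq, add_eq_right, sq_eq_zero_iff]
  rfl

lemma mem_semicircle_top {xm xp : ℝ} (hlt : xm < xp) :
    (⟨⟨(xm + xp) / 2, (xp - xm) / 2⟩, by simpa using hlt⟩ : ℍ) ∈ semicircle xm xp := by
  show ((xm + xp) / 2 - xm) * ((xm + xp) / 2 - xp) + ((xp - xm) / 2) ^ 2 = 0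
  ring

section FixedPoints

variable {γ : SL(2, ℝ)} {xm xp : ℝ}

lemma entries_of_isFixedPt (hfm : IsFixedPt γ xm) (hfp : IsFixedPt γ xp) (hne : xm ≠ xp) :
    γ 1 1 = γ 0 0 - γ 1 0 * (xm + xp) ∧ γ 0 1 = -(γ 1 0 * xm * xp) := by
  unfold IsFixedPt at hfm hfp
  have hd : γ 1 1 = γ 0 0 - γ 1 0 * (xm + xp) := by
    have h : (xm - xp) * (γ 1 0 * (xm + xp) + γ 1 1 - γ 0 0) = 0 := by
      linear_combination hfm - hfp
    linear_combination (mul_eq_zero.mp h).resolve_left (sub_ne_zero.mpr hne)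
  exact ⟨hd, by linear_combination xm * hd - hfm⟩

lemma det_of_isFixedPt (hfm : IsFixedPt γ xm) (hfp : IsFixedPt γ xp) (hne : xm ≠ xp) :
    (γ 0 0 - γ 1 0 * xm) * (γ 0 0 - γ 1 0 * xp) = 1 := by
  obtain ⟨hd, hb⟩ := entries_of_isFixedPt hfm hfp hne
  linear_combination det_fin_two_eq_one γ - γ 0 0 * hd + γ 1 0 * hb

lemma sinh_half_dist_smul_of_isFixedPt (hfm : IsFixedPt γ xm) (hfp : IsFixedPt γ xp)
    (hne : xm ≠ xp) (z : ℍ) :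
    sinh (dist z (γ • z) / 2) = |γ 1 0| * (‖(z : ℂ) - xm‖ * ‖(z : ℂ) - xp‖) / (2 * z.im) := by
  obtain ⟨hd, hb⟩ := entries_of_isFixedPt hfm hfp hne
  have hQ : (γ 1 0 : ℂ) * z ^ 2 + (γ 1 1 - γ 0 0 : ℝ) * z - γ 0 1 =
      γ 1 0 * ((z - xm) * (z - xp)) := by
    rw [hd, hb]
    push_cast
    ring
  rw [sinh_half_dist_smul, hQ, norm_mul, norm_mul, Complex.norm_real, Real.norm_eq_abs]

lemma sinh_half_dist_smul_ge (hfm : IsFixedPt γ xm) (hfp : IsFixedPt γ xp) (hlt : xm < xp)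
    (z : ℍ) : |γ 1 0| * (xp - xm) / 2 ≤ sinh (dist z (γ • z) / 2) := by
  rw [sinh_half_dist_smul_of_isFixedPt hfm hfp hlt.ne z, le_div_iff₀ (by positivity [z.im_pos])]
  have := mul_le_mul_of_nonneg_left (im_mul_sub_le_norm_mul_norm z xm xp) (abs_nonneg (γ 1 0))
  linarith

lemma sinh_half_dist_smul_eq_iff (hfm : IsFixedPt γ xm) (hfp : IsFixedPt γ xp) (hlt : xm < xp)
    (hc : γ 1 0 ≠ 0) (z : ℍ) :
    sinh (dist z (γ • z) / 2) = |γ 1 0| * (xp - xm) / 2 ↔ z ∈ semicircle xm xp := by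
  have hy := z.im_pos
  have hc' : 0 < |γ 1 0| := abs_pos.mpr hc
  rw [← norm_mul_norm_eq_iff_mem_semicircle z hlt.le,
    sinh_half_dist_smul_of_isFixedPt hfm hfp hlt.ne z, div_eq_div_iff (by positivity) two_ne_zero]
  constructor
  · intro h
    nlinarith
  · intro h
    rw [h]
    ring

theorem axis_eq_semicircle (hfm : IsFixedPt γ xm) (hfp : IsFixedPt γ xp) (hlt : xm < xp)
    (hc : γ 1 0 ≠ 0) : Axis γ = semicircle xm xp := by
  have hz₀ := mem_semicircle_top hlt
  set z₀ : ℍ := ⟨⟨(xm + xp) / 2, (xp - xm) / 2⟩, _⟩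
  have hsinh := (sinh_half_dist_smul_eq_iff hfm hfp hlt hc z₀).mpr hz₀
  have hmin : ∀ z : ℍ, dist z₀ (γ • z₀) ≤ dist z (γ • z) := fun z => by
    have h := sinh_half_dist_smul_ge hfm hfp hlt z
    rw [← hsinh, sinh_le_sinh] at h
    linarith
  ext z
  rw [Axis, Set.mem_ofPred_eq, transLength_eq_of_forall_le hmin,
    ← sinh_half_dist_smul_eq_iff hfm hfp hlt hc, ← hsinh, sinh_inj, div_left_inj' two_ne_zero]

end FixedPoints

section Semicircle

variable {xm xp : ℝ}

/-- The witness is the Möbius map `z ↦ (z - xm) / (xp - z)`. -/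
lemma exists_smul_semicircle_eq_vertical (hlt : xm < xp) :
    ∃ σ : SL(2, ℝ), ∀ z ∈ semicircle xm xp,
      ((σ • z : ℍ) : ℂ) = ((z.re - xm) / z.im : ℝ) * Complex.I := by
  set s := √(xp - xm)
  have hs : s ^ 2 = xp - xm := Real.sq_sqrt (sub_nonneg.mpr hlt.le)
  have hs0 : s ≠ 0 := by positivity [sub_pos.mpr hlt]
  let σ : SL(2, ℝ) := ⟨!![1 / s, -xm / s; -1 / s, xp / s], by
    rw [Matrix.det_fin_two_of]
    field_simp
    linear_combination -hs⟩
  refine ⟨σ, fun z hz => ?_⟩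
  have hz' : (z.re - xm) * (z.re - xp) + z.im ^ 2 = 0 := hz
  have hy : (z.im : ℂ) ≠ 0 := Complex.ofReal_ne_zero.mpr z.im_ne_zero
  have hs' : (s : ℂ) ≠ 0 := Complex.ofReal_ne_zero.mpr hs0
  have hden : (xp : ℂ) - z ≠ 0 := fun h =>
    z.im_ne_zero (by simpa using (congrArg Complex.im h).symm)
  have hσden : -1 / (s : ℂ) * z + xp / s = (xp - z) / s := by ring
  rw [coe_smul_eq_div]
  simp only [σ, of_apply, cons_val', cons_val_zero, cons_val_one, empty_val', cons_val_fin_one,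
    Complex.ofReal_div, Complex.ofReal_one, Complex.ofReal_neg, Complex.ofReal_sub]
  rw [hσden, div_eq_iff (div_ne_zero hden hs')]
  field_simp
  apply Complex.ext
  · simp [← sub_eq_add_neg]
  · simp
    linear_combination hz'

lemma dist_eq_of_mem_semicircle (hlt : xm < xp) {z w : ℍ} (hz : z ∈ semicircle xm xp)
    (hw : w ∈ semicircle xm xp) :
    dist z w = dist (log ((z.re - xm) / z.im)) (log ((w.re - xm) / w.im)) := by
  obtain ⟨σ, hσ⟩ := exists_smul_semicircle_eq_vertical hlt
  have hre : ∀ u ∈ semicircle xm xp, (σ • u).re = 0 := fun u hu => by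
    rw [← coe_re, hσ u hu]
    simp
  have him : ∀ u ∈ semicircle xm xp, (σ • u).im = (u.re - xm) / u.im := fun u hu => by
    rw [← coe_im, hσ u hu]
    simp
  rw [← dist_smul σ z w, dist_of_re_eq ((hre z hz).trans (hre w hw).symm), him z hz, him w hw]

lemma sub_pos_of_mem_semicircle (hlt : xm < xp) {z : ℍ} (hz : z ∈ semicircle xm xp) :
    0 < z.re - xm := by
  have hz' : (z.re - xm) * (z.re - xp) + z.im ^ 2 = 0 := hz
  nlinarith [z.im_pos]

lemma div_im_le_of_mem_semicircle (hlt : xm < xp) {z w : ℍ} (hz : z ∈ semicircle xm xp)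
    (hw : w ∈ semicircle xm xp) (hle : z.re ≤ w.re) :
    (z.re - xm) / z.im ≤ (w.re - xm) / w.im := by
  have hz' : (z.re - xm) * (z.re - xp) + z.im ^ 2 = 0 := hz
  have hw' : (w.re - xm) * (w.re - xp) + w.im ^ 2 = 0 := hw
  have hzm := sub_pos_of_mem_semicircle hlt hz
  have hwm := sub_pos_of_mem_semicircle hlt hw
  rw [div_le_div_iff₀ z.im_pos w.im_pos, ← pow_le_pow_iff_left₀ (by positivity [w.im_pos])
    (by positivity [z.im_pos]) two_ne_zero]
  have key : ((w.re - xm) * z.im) ^ 2 - ((z.re - xm) * w.im) ^ 2 =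
      (z.re - xm) * (w.re - xm) * (xp - xm) * (w.re - z.re) := by
    linear_combination (w.re - xm) ^ 2 * hz' - (z.re - xm) ^ 2 * hw'
  have : 0 ≤ (z.re - xm) * (w.re - xm) * (xp - xm) * (w.re - z.re) := by
    have := sub_pos.mpr hlt
    have := sub_nonneg.mpr hle
    positivity
  linarith

lemma dist_add_dist_of_mem_semicircle (hlt : xm < xp) {z w u : ℍ} (hz : z ∈ semicircle xm xp)
    (hw : w ∈ semicircle xm xp) (hu : u ∈ semicircle xm xp) (hbtw : w.re ∈ Set.uIcc z.re u.re) :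
    dist z w + dist w u = dist z u := by
  rw [dist_eq_of_mem_semicircle hlt hz hw, dist_eq_of_mem_semicircle hlt hw hu,
    dist_eq_of_mem_semicircle hlt hz hu]
  refine dist_add_dist_of_mem_segment ?_
  rw [segment_eq_uIcc]
  have mono : ∀ {a b : ℍ}, a ∈ semicircle xm xp → b ∈ semicircle xm xp → a.re ≤ b.re →
      log ((a.re - xm) / a.im) ≤ log ((b.re - xm) / b.im) := fun ha hb hab =>
    log_le_log (div_pos (sub_pos_of_mem_semicircle hlt ha) (im_pos _))
      (div_im_le_of_mem_semicircle hlt ha hb hab)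
  rcases Set.mem_uIcc.mp hbtw with ⟨h₁, h₂⟩ | ⟨h₁, h₂⟩
  · exact Set.mem_uIcc.mpr (Or.inl ⟨mono hz hw h₁, mono hw hu h₂⟩)
  · exact Set.mem_uIcc.mpr (Or.inr ⟨mono hu hw h₁, mono hw hz h₂⟩)

end Semicircle

section Rotation

variable {v : SL(2, ℝ)} {a c : ℝ}

lemma rotation_entries (hv : v • I = I) :
    v 1 1 = v 0 0 ∧ v 0 1 = -v 1 0 ∧ v 0 0 ^ 2 + v 1 0 ^ 2 = 1 := by
  obtain ⟨h₁₁, h₀₁⟩ := (gl_smul_I_eq_I_iff_of_pos (g := (v : GL (Fin 2) ℝ)) (by simp)).mp hv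
  simp only [SpecialLinearGroup.coe_GL_coe_matrix] at h₁₁ h₀₁
  exact ⟨h₁₁.symm, h₀₁, by linear_combination det_fin_two_eq_one v + v 0 0 * h₁₁ + v 1 0 * h₀₁⟩

lemma rotation_smul_vray_re_im (hv : v • I = I) (t : ℝ) :
    (v • vray t).re * (v 0 0 ^ 2 + v 1 0 ^ 2 * exp t ^ 2) = v 0 0 * v 1 0 * (exp t ^ 2 - 1) ∧
      (v • vray t).im * (v 0 0 ^ 2 + v 1 0 ^ 2 * exp t ^ 2) = exp t := by
  obtain ⟨h₁₁, h₀₁, -⟩ := rotation_entries hv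
  obtain ⟨hre, him⟩ := smul_vray_re_im v t
  rw [h₁₁, h₀₁] at hre
  rw [h₁₁] at him
  exact ⟨by linear_combination hre, him⟩

lemma abs_sub_le_dist_vray_smul_vray (hv : v • I = I) {s t : ℝ} (hs : 0 ≤ s) (ht : 0 ≤ t) :
    |s - t| ≤ dist (vray s) (v • vray t) := by
  have ht' : dist (v • vray t) (vray 0) = t := by
    have h₀ : v • vray 0 = vray 0 := by rw [vray_zero, hv]
    rw [← h₀, dist_smul, dist_vray, sub_zero, abs_of_nonneg ht]
  have h := abs_dist_sub_le (vray s) (v • vray t) (vray 0)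
  rwa [ht', dist_vray, sub_zero, abs_of_nonneg hs] at h

lemma rotation_eq_mul_of_tendsto (hv : v • I = I) {x : ℝ}
    (hlim : Tendsto (fun t : ℝ => ((v • vray t : ℍ) : ℂ)) atTop (𝓝 (x : ℂ))) :
    v 0 0 = x * v 1 0 := by
  obtain ⟨-, -, hnorm⟩ := rotation_entries hv
  -- the real part of `v 0 0 - v 1 0 * (v • z) = 1 / (v 1 0 * z + v 0 0)` at `z = eᵗ i`
  have key : ∀ t : ℝ,
      v 0 0 - v 1 0 * (v • vray t).re = v 0 0 * (v • vray t).im * exp (-t) := by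
    intro t
    obtain ⟨hre, him⟩ := rotation_smul_vray_re_im hv t
    have hN : 0 < v 0 0 ^ 2 + v 1 0 ^ 2 * exp t ^ 2 := by
      nlinarith [(v • vray t).im_pos, exp_pos t]
    rw [exp_neg]
    field_simp
    refine mul_right_cancel₀ hN.ne' ?_
    linear_combination (-(v 1 0) * exp t) * hre - v 0 0 * him + v 0 0 * exp t * hnorm
  have hre : Tendsto (fun t : ℝ => v 0 0 - v 1 0 * (v • vray t).re) atTop
      (𝓝 (v 0 0 - v 1 0 * x)) := by
    have := (Complex.continuous_re.tendsto _).comp hlim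
    simp only [Complex.ofReal_re] at this
    exact tendsto_const_nhds.sub (tendsto_const_nhds.mul this)
  have him : Tendsto (fun t : ℝ => v 0 0 * (v • vray t).im * exp (-t)) atTop (𝓝 0) := by
    have := (Complex.continuous_im.tendsto _).comp hlim
    simp only [Complex.ofReal_im] at this
    simpa using (tendsto_const_nhds.mul this).mul tendsto_exp_neg_atTop_nhds_zero
  have := tendsto_nhds_unique (hre.congr key) him
  linarith

lemma rotation_entry_ne_zero (hv : v • I = I) (hva : c * v 0 0 = a * v 1 0) (hc : c ≠ 0) :
    v 1 0 ≠ 0 := by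
  obtain ⟨-, -, hnorm⟩ := rotation_entries hv
  rintro hm
  have hα : v 0 0 = 0 := by simpa [hm, hc] using hva
  simp [hα, hm] at hnorm

lemma rotation_smul_vray_re (hv : v • I = I) (hva : c * v 0 0 = a * v 1 0) (hc : c ≠ 0)
    (t : ℝ) : (v • vray t).re * (a ^ 2 + c ^ 2 * exp t ^ 2) = a * c * (exp t ^ 2 - 1) := by
  obtain ⟨hre, -⟩ := rotation_smul_vray_re_im hv t
  refine mul_left_cancel₀ (pow_ne_zero 2 (rotation_entry_ne_zero hv hva hc)) ?_
  linear_combination c ^ 2 * hre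
    - ((v • vray t).re * (a * v 1 0 + c * v 0 0) - (exp t ^ 2 - 1) * c * v 1 0) * hva

lemma rotation_smul_vray_mem_semicircle_iff (hv : v • I = I) {xm xp : ℝ}
    (hdet : (a - c * xm) * (a - c * xp) = 1) (hva : c * v 0 0 = a * v 1 0) (hc : c ≠ 0)
    (t : ℝ) :
    v • vray t ∈ semicircle xm xp ↔ exp t ^ 2 = -((c + a * xm) * (c + a * xp)) := by
  obtain ⟨-, -, hnorm⟩ := rotation_entries hv
  obtain ⟨hre, him⟩ := rotation_smul_vray_re_im hv t
  have hm := rotation_entry_ne_zero hv hva hc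
  set α := v 0 0
  set m := v 1 0
  set E := exp t
  set q := v • vray t
  set N := α ^ 2 + m ^ 2 * E ^ 2
  have hN : 0 < N := by nlinarith [q.im_pos, exp_pos t]
  set Φ := E ^ 2 * (α ^ 2 - (xm + xp) * α * m + xm * xp * m ^ 2) +
    (m ^ 2 + (xm + xp) * α * m + xm * xp * α ^ 2)
  have h₁ : ((q.re - xm) * (q.re - xp) + q.im ^ 2) * N ^ 2 = N * Φ := by
    linear_combination (q.re * N + α * m * (E ^ 2 - 1) - (xm + xp) * N) * hre
      + (q.im * N + E) * him - E ^ 2 * (α ^ 2 + m ^ 2 + 1) * hnorm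
  have h₂ : c ^ 2 * Φ = m ^ 2 * (E ^ 2 - -((c + a * xm) * (c + a * xp))) := by
    linear_combination (E ^ 2 * (c * α + a * m - (xm + xp) * c * m) + (xm + xp) * c * m
      + xm * xp * (c * α + a * m)) * hva + E ^ 2 * m ^ 2 * hdet
  have key : c ^ 2 * N ^ 2 * ((q.re - xm) * (q.re - xp) + q.im ^ 2) =
      m ^ 2 * N * (E ^ 2 - -((c + a * xm) * (c + a * xp))) := by
    linear_combination c ^ 2 * h₁ + N * h₂
  change (q.re - xm) * (q.re - xp) + q.im ^ 2 = 0 ↔ _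
  rw [← sub_eq_zero (a := E ^ 2), ← mul_eq_zero_iff_left (by positivity : c ^ 2 * N ^ 2 ≠ 0), key,
    mul_eq_zero_iff_left (by positivity)]

lemma exists_rotation_smul_vray_mem_semicircle (hv : v • I = I) {xm xp : ℝ}
    (hdet : (a - c * xm) * (a - c * xp) = 1) (hva : c * v 0 0 = a * v 1 0) (hc : c ≠ 0)
    (hx : xm * xp ≤ -1) : ∃ t : ℝ, 0 ≤ t ∧ v • vray t ∈ semicircle xm xp := by
  set F := -((c + a * xm) * (c + a * xp))
  have hF : 1 ≤ F := by nlinarith [sq_nonneg a, sq_nonneg c]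
  refine ⟨log F / 2, by positivity [log_nonneg hF], ?_⟩
  rw [rotation_smul_vray_mem_semicircle_iff hv hdet hva hc, sq, ← exp_add, add_halves,
    exp_log (by linarith)]

end Rotation

/-- With `a, c, d` the entries of `γ` and `Y = e^{tγ}`, `x` and `g` are the real parts of the
crossing point and of `γ • (Y i)`. -/
lemma crossing_re_mem_uIcc {a c d Y x g : ℝ} (hY : 1 ≤ Y ^ 2) (had : a * d = 1 + c ^ 2 * Y ^ 2)
    (hx : x * (1 + c ^ 2 * (Y ^ 2 - 1)) = a * c * (Y ^ 2 - 1))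
    (hg : g * (d ^ 2 + c ^ 2 * Y ^ 2) = c * Y ^ 2 * (a + d)) : x ∈ Set.uIcc 0 g := by
  have hY' : 0 ≤ Y ^ 2 - 1 := sub_nonneg.mpr hY
  have hD₁ : 0 < 1 + c ^ 2 * (Y ^ 2 - 1) := by positivity
  have hD₂ : 0 < d ^ 2 + c ^ 2 * Y ^ 2 := by
    rcases eq_or_ne d 0 with rfl | hd
    · nlinarith
    · positivity
  have key : x * (g - x) * ((1 + c ^ 2 * (Y ^ 2 - 1)) ^ 2 * (d ^ 2 + c ^ 2 * Y ^ 2)) =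
      c ^ 2 * (Y ^ 2 - 1) * (a ^ 2 * Y ^ 2 + 1 + c ^ 2 * Y ^ 2) := by
    linear_combination (g * (d ^ 2 + c ^ 2 * Y ^ 2) * (1 + c ^ 2 * (Y ^ 2 - 1))
        - (a * c * (Y ^ 2 - 1) + x * (1 + c ^ 2 * (Y ^ 2 - 1))) * (d ^ 2 + c ^ 2 * Y ^ 2)) * hx
      + a * c * (Y ^ 2 - 1) * (1 + c ^ 2 * (Y ^ 2 - 1)) * hg
      + c ^ 2 * (Y ^ 2 - 1) * (Y ^ 2 * (1 + c ^ 2 * (Y ^ 2 - 1))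
        - (Y ^ 2 - 1) * (1 + c ^ 2 * Y ^ 2 + a * d)) * had
  have hxg : 0 ≤ x * (g - x) := by
    refine nonneg_of_mul_nonneg_left (key ▸ ?_) (by positivity :
      0 < (1 + c ^ 2 * (Y ^ 2 - 1)) ^ 2 * (d ^ 2 + c ^ 2 * Y ^ 2))
    positivity
  rw [Set.mem_uIcc]
  rcases mul_nonneg_iff.mp hxg with ⟨h₁, h₂⟩ | ⟨h₁, h₂⟩
  · exact Or.inl ⟨h₁, by linarith⟩
  · exact Or.inr ⟨by linarith, h₁⟩

lemma rotation_smul_vray_re_mem_uIcc {γ v : SL(2, ℝ)} {xm xp : ℝ} (hfm : IsFixedPt γ xm)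
    (hfp : IsFixedPt γ xp) (hne : xm ≠ xp) (hc : γ 1 0 ≠ 0) (hv : v • I = I)
    (hva : γ 1 0 * v 0 0 = γ 0 0 * v 1 0) {s t : ℝ} (hs : 0 ≤ s)
    (hps : vray s ∈ semicircle xm xp) (hqt : v • vray t ∈ semicircle xm xp) :
    (v • vray t).re ∈ Set.uIcc (vray s).re (γ • vray s).re := by
  obtain ⟨-, hb⟩ := entries_of_isFixedPt hfm hfp hne
  have hdet := det_of_isFixedPt hfm hfp hne
  have hY : xm * xp = -exp s ^ 2 := by
    have h : (0 - xm) * (0 - xp) + exp s ^ 2 = 0 := hps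
    linear_combination h
  have hE := (rotation_smul_vray_mem_semicircle_iff hv hdet hva hc t).mp hqt
  have hre := rotation_smul_vray_re hv hva hc t
  obtain ⟨hgre, -⟩ := smul_vray_re_im γ s
  have hac : γ 0 0 ^ 2 + γ 1 0 ^ 2 ≠ 0 := by positivity
  rw [vray_re]
  refine crossing_re_mem_uIcc (a := γ 0 0) (c := γ 1 0) (d := γ 1 1)
    (one_le_pow₀ (one_le_exp hs)) ?_ ?_ ?_
  · linear_combination det_fin_two_eq_one γ + γ 1 0 * hb - γ 1 0 ^ 2 * hY
  · refine mul_left_cancel₀ hac ?_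
    linear_combination hre + (γ 0 0 * γ 1 0 - (v • vray t).re * γ 1 0 ^ 2) *
      (hE + hdet - (γ 0 0 ^ 2 + γ 1 0 ^ 2) * hY)
  · linear_combination hgre + γ 1 1 * hb - γ 1 1 * γ 1 0 * hY

theorem winding_crosses_axis_general
    (γ : SL(2, ℝ))
    (xm xp : ℝ) (hfm : IsFixedPt γ xm) (hfp : IsFixedPt γ xp)
    (hm : xm < 0) (hp : 0 < xp) (hc : γ 1 0 ≠ 0)
    (v : SL(2, ℝ)) (hv0 : v • (UpperHalfPlane.I : ℍ) = UpperHalfPlane.I)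
    (hvend : Tendsto (fun t : ℝ => ((v • vray t : ℍ) : ℂ)) atTop
      (nhds ((γ 0 0 / γ 1 0 : ℝ) : ℂ)))
    (tγ : ℝ) (htγ : 0 ≤ tγ) (haxis : vray tγ ∈ Axis γ) :
    (∃ t' : ℝ, 0 ≤ t' ∧ (v • vray t' : ℍ) ∈ Axis γ) ∧
    ∀ t' : ℝ, 0 ≤ t' → (v • vray t' : ℍ) ∈ Axis γ →
      dist (vray tγ) (v • vray t' : ℍ) + dist (v • vray t' : ℍ) (γ • vray tγ : ℍ) =
          dist (vray tγ) (γ • vray tγ : ℍ) ∧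
      dist (vray tγ) (γ • vray tγ : ℍ) = transLength γ ∧
      dist (v • vray t' : ℍ) (vray tγ) ≤ transLength γ ∧
      dist (v • vray t' : ℍ) (γ • vray tγ : ℍ) ≤ transLength γ ∧
      |tγ - t'| ≤ transLength γ := by
  have hlt : xm < xp := hm.trans hp
  have hax := axis_eq_semicircle hfm hfp hlt hc
  have hva : γ 1 0 * v 0 0 = γ 0 0 * v 1 0 := by
    rw [rotation_eq_mul_of_tendsto hv0 hvend]
    field_simp
  have hps : vray tγ ∈ semicircle xm xp := hax ▸ haxis
  have hx : xm * xp ≤ -1 := by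
    have h : (0 - xm) * (0 - xp) + exp tγ ^ 2 = 0 := hps
    nlinarith [one_le_pow₀ (n := 2) (one_le_exp htγ)]
  refine ⟨?_, fun t' ht' hq => ?_⟩
  · rw [hax]
    exact exists_rotation_smul_vray_mem_semicircle hv0 (det_of_isFixedPt hfm hfp hlt.ne) hva hc hx
  have hadd := dist_add_dist_of_mem_semicircle hlt hps (hax ▸ hq) (hax ▸ smul_mem_axis haxis)
    (rotation_smul_vray_re_mem_uIcc hfm hfp hlt.ne hc hv0 hva htγ hps (hax ▸ hq))
  have hL : dist (vray tγ) (γ • vray tγ) = transLength γ := haxis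
  have := abs_sub_le_dist_vray_smul_vray hv0 htγ ht'
  rw [dist_comm (v • vray t') (vray tγ)]
  refine ⟨hadd, hL, ?_, ?_, ?_⟩ <;> linarith [dist_nonneg (x := vray tγ) (y := v • vray t'),
    dist_nonneg (x := v • vray t') (y := γ • vray tγ)]

theorem winding_crosses_axis
    (γ : SL(2, ℝ)) (hγ : IsHyperbolic γ)
    (xm xp : ℝ) (hfm : IsFixedPt γ xm) (hfp : IsFixedPt γ xp)
    (hm : xm < 0) (hp : 0 < xp) (hc : γ 1 0 ≠ 0)
    (v : SL(2, ℝ)) (hv0 : v • (UpperHalfPlane.I : ℍ) = UpperHalfPlane.I)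
    (hvend : Tendsto (fun t : ℝ => ((v • vray t : ℍ) : ℂ)) atTop
      (nhds ((γ 0 0 / γ 1 0 : ℝ) : ℂ)))
    (tγ : ℝ) (htγ : 0 ≤ tγ) (haxis : vray tγ ∈ Axis γ) :
    (∃ t' : ℝ, 0 ≤ t' ∧ (v • vray t' : ℍ) ∈ Axis γ) ∧
    ∀ t' : ℝ, 0 ≤ t' → (v • vray t' : ℍ) ∈ Axis γ →
      dist (vray tγ) (v • vray t' : ℍ) + dist (v • vray t' : ℍ) (γ • vray tγ : ℍ) =
          dist (vray tγ) (γ • vray tγ : ℍ) ∧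
      dist (vray tγ) (γ • vray tγ : ℍ) = transLength γ ∧
      dist (v • vray t' : ℍ) (vray tγ) ≤ transLength γ ∧
      dist (v • vray t' : ℍ) (γ • vray tγ : ℍ) ≤ transLength γ ∧
      |tγ - t'| ≤ transLength γ :=
  winding_crosses_axis_general γ xm xp hfm hfp hm hp hc v hv0 hvend tγ htγ haxis

end BellisFormal
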